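/- Let n ≥ 2 and let w, w' ∈ {0,1}^{{-1,1}^n} be distinct 0–1 vectors indexed by the facets of the cross polytope, each of Hamming weight 2^{n-1}, with Hamming distance dist(w, w') ≥ 2^n/4. Then the corresponding cross polytopes with peaks satisfy vol(B_w) = vol(B_{w'}) and the volume of the symmetric difference B_w Δ B_{w'} is at least vol(O_n)/(4(n-1)). -/

import Mathlib

open MeasureTheory Set ENNReal Finset

/-- The cross polytope `O_n`: the convex hull of `{±e_i : i ∈ [n]}`. -/
noncomputable def crossPolytope (n : ℕ) : Set (Fin n → ℝ) :=
  convexHull ℝ ((Set.range fun i : Fin n => Pi.single i (1 : ℝ)) ∪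
    (Set.range fun i : Fin n => Pi.single i (-1 : ℝ)))

/-- The sign vector in `{-1,1}^n` associated to `b : Fin n → Bool`. -/
def signVec (n : ℕ) (b : Fin n → Bool) : Fin n → ℝ := fun i => if b i then 1 else -1

/-- The peak attached to the facet `F_s = conv{s_i e_i}`, namely
`conv(F_s ∪ {s/(n-1)})`. -/
noncomputable def peak (n : ℕ) (s : Fin n → ℝ) : Set (Fin n → ℝ) :=
  convexHull ℝ ((Set.range fun i : Fin n => Pi.single i (s i)) ∪ {((n : ℝ) - 1)⁻¹ • s})

/-- The cross polytope with the peaks indexed by the 0–1 vector `w` attached. -/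
noncomputable def body (n : ℕ) (w : (Fin n → Bool) → Bool) : Set (Fin n → ℝ) :=
  crossPolytope n ∪ ⋃ (b : Fin n → Bool) (_ : w b = true), peak n (signVec n b)

/-- The Hamming weight of a binary word: the number of coordinates equal to `true`. -/
def wt {ι : Type*} [Fintype ι] (c : ι → Bool) : ℕ :=
  (Finset.univ.filter fun i => c i = true).card

/-!
Let `V` be the volume of the corner simplex `conv {0, e_1, …, e_n}`. Its `2 ^ n` images under the
coordinate sign flips `D_s` tile `O_n`, so `vol O_n = 2 ^ n V`. The peak over `F_s` is the image of
the corner simplex under `x ↦ s / (n - 1) + D_s (x - (∑ x) / (n - 1) 𝟙)`, whose linear part has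
determinant `± 1 / (n - 1)`, so every peak has volume `V / (n - 1)`. Peaks over distinct facets lie
in distinct orthants, and the peak over `F_s` lies in `{⟨s, x⟩ ≥ 1}` while `O_n ⊆ {⟨s, x⟩ ≤ 1}`, so
all these pieces overlap in null sets only. Hence `vol B_w = vol O_n + wt(w) V / (n - 1)`, and
almost every point of a peak over a facet where `w` and `w'` differ lies in exactly one of `B_w`,
`B_w'`, so `vol (B_w ∆ B_w') ≥ dist(w, w') V / (n - 1) ≥ 2 ^ (n - 2) V / (n - 1)`.
-/

open Pointwise

section

variable {n : ℕ}

lemma signVec_mul_self (b : Fin n → Bool) (i : Fin n) : signVec n b i * signVec n b i = 1 := by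
  unfold signVec; split <;> norm_num

lemma abs_signVec (b : Fin n → Bool) (i : Fin n) : |signVec n b i| = 1 := by
  unfold signVec; split <;> norm_num

lemma signVec_eq_neg_of_ne {b b' : Fin n → Bool} {i : Fin n} (h : b i ≠ b' i) :
    signVec n b' i = -signVec n b i := by
  unfold signVec; cases hb : b i <;> cases hb' : b' i <;> simp_all

noncomputable def signFlip (n : ℕ) (b : Fin n → Bool) : (Fin n → ℝ) →ₗ[ℝ] (Fin n → ℝ) :=
  Matrix.toLin' (Matrix.diagonal (signVec n b))

@[simp]
lemma signFlip_apply (b : Fin n → Bool) (x : Fin n → ℝ) (i : Fin n) :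
    signFlip n b x i = signVec n b i * x i := by
  simp [signFlip, Matrix.mulVec_diagonal]

lemma signFlip_signFlip (b : Fin n → Bool) (x : Fin n → ℝ) : signFlip n b (signFlip n b x) = x := by
  ext i; rw [signFlip_apply, signFlip_apply, ← mul_assoc, signVec_mul_self, one_mul]

lemma signFlip_single (b : Fin n → Bool) (i : Fin n) (c : ℝ) :
    signFlip n b (Pi.single i c) = Pi.single i (signVec n b i * c) := by
  ext j; rcases eq_or_ne j i with rfl | hji <;> simp [*]

lemma abs_det_signFlip (b : Fin n → Bool) : |LinearMap.det (signFlip n b)| = 1 := by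
  simp [signFlip, Matrix.det_diagonal, Finset.abs_prod, abs_signVec]

noncomputable def shear (n : ℕ) : (Fin n → ℝ) →ₗ[ℝ] (Fin n → ℝ) :=
  Matrix.toLin' ((1 : Matrix (Fin n) (Fin n) ℝ) +
    Matrix.replicateCol Unit (fun _ : Fin n => -((n : ℝ) - 1)⁻¹) *
      Matrix.replicateRow Unit (fun _ => (1 : ℝ)))

lemma shear_apply (x : Fin n → ℝ) (i : Fin n) :
    shear n x i = x i - ((n : ℝ) - 1)⁻¹ * ∑ j, x j := by
  simp [shear, Matrix.mulVec, Matrix.replicateCol, Matrix.replicateRow,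
    Matrix.mul_apply, dotProduct, Finset.mul_sum, sub_eq_add_neg]

lemma det_shear (hn : 2 ≤ n) : LinearMap.det (shear n) = -((n : ℝ) - 1)⁻¹ := by
  have : (n : ℝ) - 1 ≠ 0 := by
    have : (2 : ℝ) ≤ n := by exact_mod_cast hn
    linarith
  rw [shear, LinearMap.det_toLin', Matrix.det_one_add_replicateCol_mul_replicateRow]
  simp only [dotProduct, one_mul, sum_neg_distrib, sum_const, card_univ, Fintype.card_fin,
    nsmul_eq_mul]
  field_simp
  ring

noncomputable def signDot (n : ℕ) (b : Fin n → Bool) : (Fin n → ℝ) →ₗ[ℝ] ℝ :=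
  ∑ i, signVec n b i • LinearMap.proj i

lemma signDot_apply (b : Fin n → Bool) (x : Fin n → ℝ) :
    signDot n b x = ∑ i, signVec n b i * x i := by
  simp [signDot]

lemma signDot_single (b : Fin n → Bool) (i : Fin n) (c : ℝ) :
    signDot n b (Pi.single i c) = signVec n b i * c := by
  simp [signDot_apply, Pi.single_apply]

lemma signDot_signVec (b : Fin n → Bool) : signDot n b (signVec n b) = n := by
  simp [signDot_apply, signVec_mul_self]

lemma addHaar_preimage_singleton_linearMap {E : Type*} [NormedAddCommGroup E] [NormedSpace ℝ E]
    [MeasurableSpace E] [BorelSpace E] [FiniteDimensional ℝ E] (μ : Measure E)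
    [μ.IsAddHaarMeasure] {f : E →ₗ[ℝ] ℝ} (hf : f ≠ 0) (c : ℝ) : μ (f ⁻¹' {c}) = 0 := by
  obtain ⟨x, hx⟩ : ∃ x, f x ≠ 0 := by
    by_contra! h
    exact hf (LinearMap.ext h)
  have hker : f ⁻¹' {c} = (fun y => -((c / f x) • x) + y) ⁻¹' (LinearMap.ker f : Set E) := by
    ext y
    simp [sub_eq_zero, hx, neg_add_eq_sub]
  rw [hker, measure_preimage_add]
  exact Measure.addHaar_submodule μ _ fun htop =>
    hx (LinearMap.mem_ker.1 (htop ▸ Submodule.mem_top))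

noncomputable def cornerSimplex (n : ℕ) : Set (Fin n → ℝ) :=
  convexHull ℝ (insert 0 (range fun i : Fin n => Pi.single i (1 : ℝ)))

lemma cornerSimplex_eq : cornerSimplex n = {x | 0 ≤ x ∧ ∑ i, x i ≤ 1} := by
  refine (convexHull_min ?_ ?_).antisymm fun x ⟨hx₀, hx₁⟩ => ?_
  · rintro _ (rfl | ⟨i, rfl⟩)
    · simp
    · simp [Pi.single_nonneg]
  · have hsum : IsLinearMap ℝ fun x : Fin n → ℝ => ∑ i, x i :=
      ⟨fun x y => Finset.sum_add_distrib, fun c x => by simp [Finset.mul_sum]⟩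
    exact (convex_Ici 0).inter (convex_halfSpace_le hsum 1)
  refine mem_convexHull_of_exists_fintype (fun o : Option (Fin n) => o.elim (1 - ∑ i, x i) x)
    (fun o => o.elim 0 fun i => Pi.single i 1) ?_ ?_ ?_ ?_
  · rintro (_ | i)
    · simpa using hx₁
    · exact hx₀ i
  · simp
  · rintro (_ | i)
    · exact mem_insert _ _
    · exact mem_insert_of_mem _ ⟨i, rfl⟩
  · ext j
    simp [Fintype.sum_option, Pi.single_apply]

lemma zero_mem_crossPolytope (hn : 1 ≤ n) : (0 : Fin n → ℝ) ∈ crossPolytope n := by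
  let i : Fin n := ⟨0, hn⟩
  have h₁ : Pi.single i 1 ∈ crossPolytope n := subset_convexHull ℝ _ (Or.inl ⟨i, rfl⟩)
  have h₂ : Pi.single i (-1) ∈ crossPolytope n := subset_convexHull ℝ _ (Or.inr ⟨i, rfl⟩)
  have hconv : Convex ℝ (crossPolytope n) := convex_convexHull ℝ _
  convert hconv h₁ h₂ (by norm_num : (0 : ℝ) ≤ 1 / 2) (by norm_num : (0 : ℝ) ≤ 1 / 2)
    (by norm_num)
  ext j
  by_cases h : j = i <;> simp [h]

lemma crossPolytope_subset_signDot_le (b : Fin n → Bool) :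
    crossPolytope n ⊆ {x | signDot n b x ≤ 1} := by
  refine convexHull_min ?_ (convex_halfSpace_le (signDot n b).isLinear 1)
  rintro _ (⟨i, rfl⟩ | ⟨i, rfl⟩) <;> simp only [mem_ofPred_eq, signDot_single]
  · simpa [abs_signVec] using le_abs_self (signVec n b i)
  · simpa [abs_signVec] using neg_le_abs (signVec n b i)

lemma signFlip_image_cornerSimplex_subset (hn : 1 ≤ n) (b : Fin n → Bool) :
    signFlip n b '' cornerSimplex n ⊆ crossPolytope n := by
  rw [cornerSimplex, LinearMap.image_convexHull]
  refine convexHull_min ?_ (convex_convexHull ℝ _)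
  rintro _ ⟨_, rfl | ⟨i, rfl⟩, rfl⟩
  · simpa using zero_mem_crossPolytope hn
  · rw [signFlip_single, mul_one]
    unfold signVec
    split
    · exact subset_convexHull ℝ _ (Or.inl ⟨i, rfl⟩)
    · exact subset_convexHull ℝ _ (Or.inr ⟨i, rfl⟩)

lemma crossPolytope_subset_iUnion_signFlip_image :
    crossPolytope n ⊆ ⋃ b, signFlip n b '' cornerSimplex n := by
  intro x hx
  let b : Fin n → Bool := fun i => decide (0 ≤ x i)
  have hnonneg : 0 ≤ signFlip n b x := fun i => by
    by_cases h : 0 ≤ x i <;> simp [b, signVec, h, le_of_not_ge]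
  refine mem_iUnion.2 ⟨b, signFlip n b x, ?_, signFlip_signFlip b x⟩
  rw [cornerSimplex_eq]
  refine ⟨hnonneg, ?_⟩
  simpa [signDot_apply] using crossPolytope_subset_signDot_le b hx

lemma crossPolytope_eq_iUnion_signFlip_image (hn : 1 ≤ n) :
    crossPolytope n = ⋃ b, signFlip n b '' cornerSimplex n :=
  crossPolytope_subset_iUnion_signFlip_image.antisymm
    (iUnion_subset (signFlip_image_cornerSimplex_subset hn))

def orthant (n : ℕ) (b : Fin n → Bool) : Set (Fin n → ℝ) :=
  {x | 0 ≤ signFlip n b x}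

lemma convex_orthant (b : Fin n → Bool) : Convex ℝ (orthant n b) :=
  (convex_Ici 0).linear_preimage (signFlip n b)

lemma signFlip_image_cornerSimplex_subset_orthant (b : Fin n → Bool) :
    signFlip n b '' cornerSimplex n ⊆ orthant n b := by
  rintro _ ⟨y, hy, rfl⟩
  rw [cornerSimplex_eq] at hy
  simpa [orthant, signFlip_signFlip] using hy.1

lemma peak_subset_orthant (b : Fin n → Bool) : peak n (signVec n b) ⊆ orthant n b := by
  refine convexHull_min ?_ (convex_orthant b)
  rintro _ (⟨i, rfl⟩ | rfl)
  · show 0 ≤ signFlip n b _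
    rw [signFlip_single, signVec_mul_self]
    exact Pi.single_nonneg.2 zero_le_one
  · intro j
    have : (1 : ℝ) ≤ n := by exact_mod_cast j.pos
    simp [mul_comm (signVec n b j), mul_assoc, signVec_mul_self, this]

lemma volume_orthant_inter_orthant {b b' : Fin n → Bool} (h : b ≠ b') :
    volume (orthant n b ∩ orthant n b') = 0 := by
  obtain ⟨i, hi⟩ : ∃ i, b i ≠ b' i := Function.ne_iff.1 h
  refine measure_mono_null (fun x ⟨hx, hx'⟩ => ?_) (addHaar_preimage_singleton_linearMap volume
    (f := LinearMap.proj i) (fun h0 => by simpa using LinearMap.congr_fun h0 (Pi.single i 1)) 0)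
  have h₁ : 0 ≤ signVec n b i * x i := by simpa using hx i
  have h₂ : 0 ≤ signVec n b' i * x i := by simpa using hx' i
  rw [signVec_eq_neg_of_ne hi] at h₂
  have : signVec n b i * x i = 0 := by linarith
  simpa [mul_eq_zero, abs_signVec, ← abs_eq_zero] using this

lemma isCompact_cornerSimplex : IsCompact (cornerSimplex n) :=
  ((finite_range _).insert 0).isCompact_convexHull (𝕜 := ℝ)

lemma isCompact_peak (s : Fin n → ℝ) : IsCompact (peak n s) :=
  ((finite_range _).union (finite_singleton _)).isCompact_convexHull (𝕜 := ℝ)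

lemma volume_signFlip_image (b : Fin n → Bool) (s : Set (Fin n → ℝ)) :
    volume (signFlip n b '' s) = volume s := by
  simp [Measure.addHaar_image_linearMap, abs_det_signFlip]

lemma volume_crossPolytope (hn : 1 ≤ n) :
    volume (crossPolytope n) = 2 ^ n * volume (cornerSimplex n) := by
  rw [crossPolytope_eq_iUnion_signFlip_image hn, measure_iUnion₀ ?_ ?_, tsum_fintype]
  · simp_rw [volume_signFlip_image]
    simp
  · exact fun b b' h => measure_mono_null
      (inter_subset_inter (signFlip_image_cornerSimplex_subset_orthant b)
        (signFlip_image_cornerSimplex_subset_orthant b')) (volume_orthant_inter_orthant h)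
  · exact fun b => (isCompact_cornerSimplex.image
      (signFlip n b).continuous_of_finiteDimensional).measurableSet.nullMeasurableSet

lemma peak_eq_vadd_image (b : Fin n → Bool) :
    peak n (signVec n b) =
      (((n : ℝ) - 1)⁻¹ • signVec n b) +ᵥ ((signFlip n b ∘ₗ shear n) '' cornerSimplex n) := by
  rw [peak, union_singleton, cornerSimplex, LinearMap.image_convexHull, ← convexHull_vadd,
    image_insert_eq, vadd_set_insert, map_zero, vadd_eq_add, add_zero, ← range_comp,
    vadd_set_range]
  congr 3
  ext i j
  simp only [Function.comp_apply, vadd_eq_add, Pi.add_apply, Pi.smul_apply, smul_eq_mul,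
    LinearMap.comp_apply, signFlip_apply, shear_apply]
  rw [Finset.sum_pi_single', if_pos (Finset.mem_univ i)]
  rcases eq_or_ne j i with rfl | hji
  · rw [Pi.single_eq_same, Pi.single_eq_same]
    ring
  · rw [Pi.single_eq_of_ne hji, Pi.single_eq_of_ne hji]
    ring

lemma volume_peak (hn : 2 ≤ n) (b : Fin n → Bool) :
    volume (peak n (signVec n b)) = volume (cornerSimplex n) / ((n : ℝ≥0∞) - 1) := by
  have h1 : (1 : ℝ) ≤ n - 1 := by
    have : (2 : ℝ) ≤ n := by exact_mod_cast hn
    linarith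
  rw [peak_eq_vadd_image, measure_vadd, Measure.addHaar_image_linearMap, LinearMap.det_comp,
    abs_mul, abs_det_signFlip, det_shear hn, one_mul, abs_neg, abs_inv, abs_of_pos (by linarith),
    ENNReal.ofReal_inv_of_pos (by linarith), ENNReal.ofReal_sub _ zero_le_one,
    ENNReal.ofReal_natCast, ENNReal.ofReal_one, ENNReal.div_eq_inv_mul]

lemma signDot_ne_zero (hn : 1 ≤ n) (b : Fin n → Bool) : signDot n b ≠ 0 := fun h => by
  simpa [signDot_single, abs_signVec] using
    congrArg abs (LinearMap.congr_fun h (Pi.single ⟨0, hn⟩ 1))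

lemma peak_subset_one_le_signDot (hn : 2 ≤ n) (b : Fin n → Bool) :
    peak n (signVec n b) ⊆ {x | 1 ≤ signDot n b x} := by
  refine convexHull_min ?_ (convex_halfSpace_ge (signDot n b).isLinear 1)
  rintro _ (⟨i, rfl⟩ | rfl) <;> simp only [mem_ofPred_eq]
  · rw [signDot_single, signVec_mul_self]
  · have : (2 : ℝ) ≤ n := by exact_mod_cast hn
    rw [map_smul, signDot_signVec, smul_eq_mul, inv_mul_eq_div, one_le_div (by linarith)]
    linarith

lemma volume_peak_inter_crossPolytope (hn : 2 ≤ n) (b : Fin n → Bool) :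
    volume (peak n (signVec n b) ∩ crossPolytope n) = 0 :=
  measure_mono_null (fun _ ⟨hp, hc⟩ => le_antisymm (crossPolytope_subset_signDot_le b hc)
      (peak_subset_one_le_signDot hn b hp))
    (addHaar_preimage_singleton_linearMap volume (signDot_ne_zero (by omega) b) 1)

lemma volume_peak_inter_peak {b b' : Fin n → Bool} (h : b ≠ b') :
    volume (peak n (signVec n b) ∩ peak n (signVec n b')) = 0 :=
  measure_mono_null (inter_subset_inter (peak_subset_orthant b) (peak_subset_orthant b'))
    (volume_orthant_inter_orthant h)

lemma volume_biUnion_peak (hn : 2 ≤ n) (S : Finset (Fin n → Bool)) :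
    volume (⋃ b ∈ S, peak n (signVec n b)) =
      #S * (volume (cornerSimplex n) / ((n : ℝ≥0∞) - 1)) := by
  rw [measure_biUnion_finset₀ (fun _ _ _ _ h => volume_peak_inter_peak h)
    (fun _ _ => (isCompact_peak _).measurableSet.nullMeasurableSet)]
  simp_rw [volume_peak hn]
  rw [sum_const, nsmul_eq_mul]

lemma volume_body (hn : 2 ≤ n) (w : (Fin n → Bool) → Bool) :
    volume (body n w) =
      volume (crossPolytope n) + wt w * (volume (cornerSimplex n) / ((n : ℝ≥0∞) - 1)) := by
  have hpeaks : ⋃ (b) (_ : w b = true), peak n (signVec n b) =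
      ⋃ b ∈ univ.filter fun b => w b = true, peak n (signVec n b) := by
    simp
  rw [body, measure_union₀ ?_ ?_, hpeaks, volume_biUnion_peak hn, wt]
  · exact .iUnion fun _ => .iUnion fun _ => (isCompact_peak _).measurableSet.nullMeasurableSet
  · exact AEDisjoint.iUnion_right_iff.2 fun b => AEDisjoint.iUnion_right_iff.2 fun _ =>
      AEDisjoint.symm (volume_peak_inter_crossPolytope hn b)

lemma ae_unique_of_mem_peak (hn : 2 ≤ n) : ∀ᵐ x, ∀ b, x ∈ peak n (signVec n b) →
    x ∉ crossPolytope n ∧ ∀ b', x ∈ peak n (signVec n b') → b' = b := by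
  refine ae_all_iff.2 fun b => ?_
  have hunique : ∀ᵐ x, ∀ b', x ∈ peak n (signVec n b') → x ∈ peak n (signVec n b) → b' = b := by
    refine ae_all_iff.2 fun b' => ?_
    by_cases h : b' = b
    · exact .of_forall fun _ _ _ => h
    · filter_upwards [measure_eq_zero_iff_ae_notMem.1 (volume_peak_inter_peak h)] with x hx h₁ h₂
      exact absurd ⟨h₁, h₂⟩ hx
  filter_upwards [measure_eq_zero_iff_ae_notMem.1 (volume_peak_inter_crossPolytope hn b), hunique]
    with x hO hx hb
  exact ⟨fun hc => hO ⟨hb, hc⟩, fun b' hb' => hx b' hb' hb⟩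

lemma mem_body_iff_of_mem_peak {x : Fin n → ℝ} {b : Fin n → Bool} (hb : x ∈ peak n (signVec n b))
    (hO : x ∉ crossPolytope n) (hunique : ∀ b', x ∈ peak n (signVec n b') → b' = b)
    (u : (Fin n → Bool) → Bool) : x ∈ body n u ↔ u b = true := by
  simp only [body, mem_union, hO, false_or, mem_iUnion, exists_prop]
  exact ⟨fun ⟨b', hu, hb'⟩ => hunique b' hb' ▸ hu, fun hu => ⟨b, hu, hb⟩⟩

lemma hammingDist_mul_le_volume_symmDiff (hn : 2 ≤ n) (w w' : (Fin n → Bool) → Bool) :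
    hammingDist w w' * (volume (cornerSimplex n) / ((n : ℝ≥0∞) - 1)) ≤
      volume (symmDiff (body n w) (body n w')) := by
  rw [hammingDist, ← volume_biUnion_peak hn]
  refine measure_mono_ae ?_
  filter_upwards [ae_unique_of_mem_peak hn] with x hx hmem
  obtain ⟨b, hb, hxb⟩ := mem_iUnion₂.1 hmem
  obtain ⟨hO, hunique⟩ := hx b hxb
  have hne : w b ≠ w' b := (mem_filter.1 hb).2
  change x ∈ symmDiff (body n w) (body n w')
  rw [mem_symmDiff, mem_body_iff_of_mem_peak hxb hO hunique,
    mem_body_iff_of_mem_peak hxb hO hunique]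
  revert hne
  cases w b <;> cases w' b <;> decide

end

theorem volume_symmDiff_bodies_general (n : ℕ) (hn : 2 ≤ n)
    (w w' : (Fin n → Bool) → Bool)
    (hw : wt w = 2 ^ (n - 1)) (hw' : wt w' = 2 ^ (n - 1))
    (hdist : 2 ^ n / 4 ≤ hammingDist w w') :
    volume (body n w) = volume (body n w') ∧
    volume (crossPolytope n) / (4 * ((n : ℝ≥0∞) - 1)) ≤
      volume (symmDiff (body n w) (body n w')) := by
  refine ⟨by rw [volume_body hn, volume_body hn, hw, hw'], ?_⟩
  have hpow : (2 : ℝ≥0∞) ^ n = 4 * 2 ^ (n - 2) := by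
    rw [show (4 : ℝ≥0∞) = 2 ^ 2 by norm_num, ← pow_add, Nat.add_sub_cancel' hn]
  have hdist' : (2 : ℝ≥0∞) ^ (n - 2) ≤ hammingDist w w' := by
    rw [show 2 ^ n / 4 = 2 ^ (n - 2) from Nat.pow_div hn two_pos] at hdist
    exact_mod_cast hdist
  calc volume (crossPolytope n) / (4 * ((n : ℝ≥0∞) - 1))
      = 2 ^ (n - 2) * (volume (cornerSimplex n) / ((n : ℝ≥0∞) - 1)) := by
        rw [volume_crossPolytope (by omega), hpow, mul_assoc,
          ENNReal.mul_div_mul_left _ _ four_ne_zero ofNat_ne_top, mul_div_assoc]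
    _ ≤ hammingDist w w' * (volume (cornerSimplex n) / ((n : ℝ≥0∞) - 1)) := by gcongr
    _ ≤ volume (symmDiff (body n w) (body n w')) := hammingDist_mul_le_volume_symmDiff hn w w'

theorem volume_symmDiff_bodies (n : ℕ) (hn : 2 ≤ n)
    (w w' : (Fin n → Bool) → Bool) (hne : w ≠ w')
    (hw : wt w = 2 ^ (n - 1)) (hw' : wt w' = 2 ^ (n - 1))
    (hdist : 2 ^ n / 4 ≤ hammingDist w w') :
    volume (body n w) = volume (body n w') ∧
    volume (crossPolytope n) / (4 * ((n : ℝ≥0∞) - 1)) ≤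
      volume (symmDiff (body n w) (body n w')) :=
  volume_symmDiff_bodies_general n hn w w' hw hw' hdist
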